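/- Fix α ∈ (1/3,1/2), T > 0, an α-Hölder rough path 𝐗, a monotone family of interpolation spaces (B_η)_{η∈ℝ}, and let G satisfy assumption (G). Let (y, G(y)) ∈ D^{2α}_{X,γ} be a controlled rough path whose Gubinelli derivative is G(y). Then (G(y), DG(y)G(y)) ∈ D^{2α}_{X,γ−σ} and ‖G(y), DG(y)G(y)‖_{X,2α,γ−σ} ≲ 1 + ‖y, G(y)‖_{X,2α,γ}; in particular the bound is linear (not quadratic) in ‖y, G(y)‖_{X,2α,γ}. -/

import Mathlib

open Set

/-- A monotone family of interpolation spaces: a scale `(B_θ)_{θ ∈ ℝ}` of separable Banach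
spaces realised inside a common ambient real vector space `E`; `Mem θ x` means `x ∈ B_θ`,
`N θ x` denotes the norm `|x|_θ`.  For `β₁ ≤ β₂` the space `B_{β₂}` is contained in `B_{β₁}`
with dense and continuous embedding, and the interpolation inequality holds. -/
structure BanachScale where
  E : Type
  [inst_add : AddCommGroup E]
  [inst_mod : Module ℝ E]
  Mem : ℝ → E → Prop
  N : ℝ → E → ℝ
  mem_zero : ∀ θ : ℝ, Mem θ 0
  mem_add : ∀ (θ : ℝ) (x y : E), Mem θ x → Mem θ y → Mem θ (x + y)
  mem_neg : ∀ (θ : ℝ) (x : E), Mem θ x → Mem θ (-x)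
  mem_smul : ∀ (θ c : ℝ) (x : E), Mem θ x → Mem θ (c • x)
  N_nonneg : ∀ (θ : ℝ) (x : E), 0 ≤ N θ x
  N_zero : ∀ θ : ℝ, N θ 0 = 0
  N_eq_zero : ∀ (θ : ℝ) (x : E), Mem θ x → N θ x = 0 → x = 0
  N_add : ∀ (θ : ℝ) (x y : E), Mem θ x → Mem θ y → N θ (x + y) ≤ N θ x + N θ y
  N_smul : ∀ (θ c : ℝ) (x : E), N θ (c • x) = |c| * N θ x
  mem_mono : ∀ ⦃β₁ β₂ : ℝ⦄, β₁ ≤ β₂ → ∀ x : E, Mem β₂ x → Mem β₁ x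
  embed_bound : ∀ ⦃β₁ β₂ : ℝ⦄, β₁ ≤ β₂ → ∃ C > (0:ℝ), ∀ x : E, Mem β₂ x → N β₁ x ≤ C * N β₂ x
  embed_dense : ∀ ⦃β₁ β₂ : ℝ⦄, β₁ ≤ β₂ → ∀ x : E, Mem β₁ x → ∀ ε > (0:ℝ),
    ∃ y : E, Mem β₂ y ∧ N β₁ (x - y) < ε
  complete : ∀ (θ : ℝ) (u : ℕ → E), (∀ n, Mem θ (u n)) →
    (∀ ε > (0:ℝ), ∃ M : ℕ, ∀ m ≥ M, ∀ n ≥ M, N θ (u m - u n) < ε) →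
    ∃ x : E, Mem θ x ∧ ∀ ε > (0:ℝ), ∃ M : ℕ, ∀ n ≥ M, N θ (u n - x) < ε
  separable : ∀ θ : ℝ, ∃ D : Set E, D.Countable ∧ (∀ x ∈ D, Mem θ x) ∧
    ∀ x : E, Mem θ x → ∀ ε > (0:ℝ), ∃ y ∈ D, N θ (x - y) < ε
  interp : ∀ ⦃θ β γ : ℝ⦄, θ ≤ β → β ≤ γ → ∃ C > (0:ℝ), ∀ x : E, Mem γ x →
    N β x ^ (γ - θ) ≤ C * (N θ x ^ (γ - β) * N γ x ^ (β - θ))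

attribute [instance] BanachScale.inst_add BanachScale.inst_mod

/-- An analytic `C₀`-semigroup `(S(t))_{t ≥ 0}` acting on a scale of Banach spaces,
together with the standard parabolic bounds
`|(S(t) - Id)x|_η ≲ t^σ |x|_{η+σ}` and `|S(t)x|_{η+σ} ≲ t^{-σ} |x|_η` for `σ ∈ [0,1]`,
with constants uniform on compact time intervals. -/
structure ScaleSemigroup (𝓑 : BanachScale) where
  S : ℝ → 𝓑.E →ₗ[ℝ] 𝓑.E
  S_id : ∀ x : 𝓑.E, S 0 x = x
  S_comp : ∀ s t : ℝ, 0 ≤ s → 0 ≤ t → ∀ x : 𝓑.E, S (s + t) x = S s (S t x)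
  S_mem : ∀ (t θ : ℝ) (x : 𝓑.E), 0 ≤ t → 𝓑.Mem θ x → 𝓑.Mem θ (S t x)
  S_bounded : ∀ θ Tm : ℝ, 0 < Tm → ∃ C > (0:ℝ), ∀ (t : ℝ) (x : 𝓑.E), 0 ≤ t → t ≤ Tm →
    𝓑.Mem θ x → 𝓑.N θ (S t x) ≤ C * 𝓑.N θ x
  S_strong_cont : ∀ (θ : ℝ) (x : 𝓑.E), 𝓑.Mem θ x → ∀ ε > (0:ℝ), ∃ δ > (0:ℝ),
    ∀ t : ℝ, 0 < t → t < δ → 𝓑.N θ (S t x - x) < ε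
  S_smoothing : ∀ η σ Tm : ℝ, 0 ≤ σ → σ ≤ 1 → 0 < Tm → ∃ C > (0:ℝ),
    ∀ (t : ℝ) (x : 𝓑.E), 0 < t → t ≤ Tm → 𝓑.Mem η x →
      𝓑.Mem (η + σ) (S t x) ∧ 𝓑.N (η + σ) (S t x) ≤ C * t ^ (-σ) * 𝓑.N η x
  S_holdId : ∀ η σ Tm : ℝ, 0 ≤ σ → σ ≤ 1 → 0 < Tm → ∃ C > (0:ℝ),
    ∀ (t : ℝ) (x : 𝓑.E), 0 < t → t ≤ Tm → 𝓑.Mem (η + σ) x →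
      𝓑.N η (S t x - x) ≤ C * t ^ σ * 𝓑.N (η + σ) x

/-- A (one-dimensional) `α`-Hölder rough path `𝐗 = (X, X⁽²⁾)` on `[0,T]`:
`X ∈ C^α`, `X₀ = 0`, `X⁽²⁾ ∈ C^{2α}` on the simplex, satisfying Chen's relation. -/
structure RoughPath (α T : ℝ) where
  X : ℝ → ℝ
  X2 : ℝ → ℝ → ℝ
  X_zero : X 0 = 0
  holderX : ∃ C : ℝ, ∀ s t : ℝ, 0 ≤ s → s ≤ t → t ≤ T → |X t - X s| ≤ C * (t - s) ^ α
  holderX2 : ∃ C : ℝ, ∀ s t : ℝ, 0 ≤ s → s ≤ t → t ≤ T → |X2 s t| ≤ C * (t - s) ^ (2 * α)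
  chen : ∀ s u t : ℝ, 0 ≤ s → s ≤ u → u ≤ t → t ≤ T →
    X2 s t - X2 s u - X2 u t = (X u - X s) * (X t - X u)

/-- The supremum norm `‖f‖_{∞, B_θ}` over `[0,T]`. -/
noncomputable def scaleSupNorm (𝓑 : BanachScale) (θ T : ℝ) (f : ℝ → 𝓑.E) : ℝ :=
  sSup {r : ℝ | ∃ t : ℝ, 0 ≤ t ∧ t ≤ T ∧ r = 𝓑.N θ (f t)}

/-- The `η`-Hölder seminorm (in `B_θ`) of a two-parameter function on `[0,T]`. -/
noncomputable def scaleHolderNorm2 (𝓑 : BanachScale) (θ η T : ℝ) (F : ℝ → ℝ → 𝓑.E) : ℝ :=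
  sSup {r : ℝ | ∃ s t : ℝ, 0 ≤ s ∧ s < t ∧ t ≤ T ∧ r = 𝓑.N θ (F s t) / (t - s) ^ η}

/-- The `η`-Hölder seminorm `‖f‖_{η, B_θ}` over `[0,T]`. -/
noncomputable def scaleHolderNorm (𝓑 : BanachScale) (θ η T : ℝ) (f : ℝ → 𝓑.E) : ℝ :=
  scaleHolderNorm2 𝓑 θ η T fun s t => f t - f s

/-- The `η`-Hölder seminorm of a real-valued path on `[0,T]`. -/
noncomputable def realHolderNorm (η T : ℝ) (X : ℝ → ℝ) : ℝ :=
  sSup {r : ℝ | ∃ s t : ℝ, 0 ≤ s ∧ s < t ∧ t ≤ T ∧ r = |X t - X s| / (t - s) ^ η}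

/-- `f : [0,T] → B_θ` is `η`-Hölder continuous. -/
def IsHolderOn (𝓑 : BanachScale) (θ η T : ℝ) (f : ℝ → 𝓑.E) : Prop :=
  ∃ C : ℝ, ∀ s t : ℝ, 0 ≤ s → s ≤ t → t ≤ T → 𝓑.N θ (f t - f s) ≤ C * (t - s) ^ η

/-- The remainder `R^y_{s,t} = y_t - y_s - y'_s X_{s,t}` of a controlled rough path. -/
def gubRemainder (𝓑 : BanachScale) (X : ℝ → ℝ) (y y' : ℝ → 𝓑.E) (s t : ℝ) : 𝓑.E :=
  y t - y s - (X t - X s) • y' s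

/-- `(y, y')` is a controlled rough path in `D^{2α}_{X,γ}([0,T])`:
`y ∈ C([0,T]; B_γ)`, `y' ∈ C([0,T]; B_{γ-α}) ∩ C^α([0,T]; B_{γ-2α})` and the remainder
`R^y ∈ C^α([0,T]; B_{γ-α}) ∩ C^{2α}([0,T]; B_{γ-2α})`. -/
structure IsControlledPath (𝓑 : BanachScale) (α γ T : ℝ) (X : ℝ → ℝ)
    (y y' : ℝ → 𝓑.E) : Prop where
  mem_y : ∀ t : ℝ, 0 ≤ t → t ≤ T → 𝓑.Mem γ (y t)
  mem_y' : ∀ t : ℝ, 0 ≤ t → t ≤ T → 𝓑.Mem (γ - α) (y' t)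
  cont_y : ∀ t : ℝ, 0 ≤ t → t ≤ T → ∀ ε > (0:ℝ), ∃ δ > (0:ℝ), ∀ s : ℝ, 0 ≤ s → s ≤ T →
    |s - t| < δ → 𝓑.N γ (y s - y t) < ε
  cont_y' : ∀ t : ℝ, 0 ≤ t → t ≤ T → ∀ ε > (0:ℝ), ∃ δ > (0:ℝ), ∀ s : ℝ, 0 ≤ s → s ≤ T →
    |s - t| < δ → 𝓑.N (γ - α) (y' s - y' t) < ε
  holder_y' : ∃ C : ℝ, ∀ s t : ℝ, 0 ≤ s → s ≤ t → t ≤ T →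
    𝓑.N (γ - 2 * α) (y' t - y' s) ≤ C * (t - s) ^ α
  rem_alpha : ∃ C : ℝ, ∀ s t : ℝ, 0 ≤ s → s ≤ t → t ≤ T →
    𝓑.N (γ - α) (gubRemainder 𝓑 X y y' s t) ≤ C * (t - s) ^ α
  rem_two_alpha : ∃ C : ℝ, ∀ s t : ℝ, 0 ≤ s → s ≤ t → t ≤ T →
    𝓑.N (γ - 2 * α) (gubRemainder 𝓑 X y y' s t) ≤ C * (t - s) ^ (2 * α)

/-- The norm `‖(y,y')‖_{X,2α,γ}` on `D^{2α}_{X,γ}([0,T])`. -/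
noncomputable def crpNorm (𝓑 : BanachScale) (α γ T : ℝ) (X : ℝ → ℝ)
    (y y' : ℝ → 𝓑.E) : ℝ :=
  scaleSupNorm 𝓑 γ T y + scaleSupNorm 𝓑 (γ - α) T y'
    + scaleHolderNorm 𝓑 (γ - 2 * α) α T y'
    + scaleHolderNorm2 𝓑 (γ - α) α T (gubRemainder 𝓑 X y y')
    + scaleHolderNorm2 𝓑 (γ - 2 * α) (2 * α) T (gubRemainder 𝓑 X y y')

/-- A partition `a = t_0 < t_1 < ⋯ < t_n = b` of the interval `[a,b]`. -/
structure RPartition (a b : ℝ) where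
  n : ℕ
  t : ℕ → ℝ
  n_pos : 0 < n
  strict : ∀ i : ℕ, i < n → t i < t (i + 1)
  first : t 0 = a
  last : t n = b

/-- The mesh `|π|` of a partition. -/
noncomputable def RPartition.mesh {a b : ℝ} (π : RPartition a b) : ℝ :=
  sSup {r : ℝ | ∃ i : ℕ, i < π.n ∧ r = π.t (i + 1) - π.t i}

/-- The compensated Riemann sum `Σ_{[u,v] ∈ π} S(b - u)[y_u X_{u,v} + y'_u X⁽²⁾_{u,v}]`. -/
noncomputable def convRiemannSum (𝓑 : BanachScale) (Sg : ScaleSemigroup 𝓑)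
    (X : ℝ → ℝ) (X2 : ℝ → ℝ → ℝ) (y y' : ℝ → 𝓑.E) {a b : ℝ} (π : RPartition a b) : 𝓑.E :=
  ∑ i ∈ Finset.range π.n,
    Sg.S (b - π.t i)
      ((X (π.t (i + 1)) - X (π.t i)) • y (π.t i) + X2 (π.t i) (π.t (i + 1)) • y' (π.t i))

/-- `I` is the rough convolution `∫_a^b S(b-r) y_r d𝐗_r`, i.e. the limit in `B_θ` of the
compensated Riemann sums over partitions of `[a,b]` with vanishing mesh. -/
def IsRoughConvolution (𝓑 : BanachScale) (Sg : ScaleSemigroup 𝓑) (X : ℝ → ℝ)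
    (X2 : ℝ → ℝ → ℝ) (y y' : ℝ → 𝓑.E) (θ a b : ℝ) (I : 𝓑.E) : Prop :=
  𝓑.Mem θ I ∧ ∀ ε > (0:ℝ), ∃ δ > (0:ℝ), ∀ π : RPartition a b, π.mesh < δ →
    𝓑.N θ (convRiemannSum 𝓑 Sg X X2 y y' π - I) ≤ ε

/-- Left Riemann sum of a `B`-valued function. -/
noncomputable def intRiemannSum (𝓑 : BanachScale) (f : ℝ → 𝓑.E) {a b : ℝ}
    (π : RPartition a b) : 𝓑.E :=
  ∑ i ∈ Finset.range π.n, (π.t (i + 1) - π.t i) • f (π.t i)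

/-- `I = ∫_a^b f(s) ds` as a `B_θ`-valued Riemann integral. -/
def IsRiemannIntegral (𝓑 : BanachScale) (θ : ℝ) (f : ℝ → 𝓑.E) (a b : ℝ) (I : 𝓑.E) : Prop :=
  𝓑.Mem θ I ∧ ∀ ε > (0:ℝ), ∃ δ > (0:ℝ), ∀ π : RPartition a b, π.mesh < δ →
    𝓑.N θ (intRiemannSum 𝓑 f π - I) ≤ ε

/-- Assumption (F): the drift `F : B_γ → B_{γ-δ}` is locally Lipschitz continuous and
satisfies a linear growth condition. -/
structure AssumptionF (𝓑 : BanachScale) (γ δ : ℝ) (F : 𝓑.E → 𝓑.E) : Prop where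
  maps : ∀ x : 𝓑.E, 𝓑.Mem γ x → 𝓑.Mem (γ - δ) (F x)
  locLip : ∀ R > (0:ℝ), ∃ L : ℝ, ∀ x y : 𝓑.E, 𝓑.Mem γ x → 𝓑.Mem γ y →
    𝓑.N γ x ≤ R → 𝓑.N γ y ≤ R → 𝓑.N (γ - δ) (F x - F y) ≤ L * 𝓑.N γ (x - y)
  linGrowth : ∃ C : ℝ, ∀ x : 𝓑.E, 𝓑.Mem γ x → 𝓑.N (γ - δ) (F x) ≤ C * (1 + 𝓑.N γ x)

/-- Assumption (G): for `θ ∈ {0, α, 2α}` the diffusion coefficient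
`G : B_{γ-θ} → B_{γ-θ-σ}` is three times continuously (Fréchet) differentiable with bounded
derivatives `DG`, `D²G`, `D³G`, and the derivative of `x ↦ DG(x)G(x) : B_{γ-α} → B_{γ-2α-σ}`
is bounded. -/
structure AssumptionG (𝓑 : BanachScale) (α σ γ : ℝ) (G : 𝓑.E → 𝓑.E)
    (DG : 𝓑.E → 𝓑.E →ₗ[ℝ] 𝓑.E)
    (D2G : 𝓑.E → 𝓑.E →ₗ[ℝ] 𝓑.E →ₗ[ℝ] 𝓑.E)
    (D3G : 𝓑.E → 𝓑.E →ₗ[ℝ] 𝓑.E →ₗ[ℝ] 𝓑.E →ₗ[ℝ] 𝓑.E) : Prop where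
  maps : ∀ θ ∈ ({0, α, 2 * α} : Set ℝ), ∀ x : 𝓑.E, 𝓑.Mem (γ - θ) x → 𝓑.Mem (γ - θ - σ) (G x)
  DG_maps : ∀ θ ∈ ({0, α, 2 * α} : Set ℝ), ∀ x h : 𝓑.E, 𝓑.Mem (γ - θ) x → 𝓑.Mem (γ - θ) h →
    𝓑.Mem (γ - θ - σ) (DG x h)
  DG_bound : ∀ θ ∈ ({0, α, 2 * α} : Set ℝ), ∃ C : ℝ, ∀ x h : 𝓑.E, 𝓑.Mem (γ - θ) x →
    𝓑.Mem (γ - θ) h → 𝓑.N (γ - θ - σ) (DG x h) ≤ C * 𝓑.N (γ - θ) h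
  DG_isDeriv : ∀ θ ∈ ({0, α, 2 * α} : Set ℝ), ∀ x : 𝓑.E, 𝓑.Mem (γ - θ) x → ∀ ε > (0:ℝ),
    ∃ δ > (0:ℝ), ∀ h : 𝓑.E, 𝓑.Mem (γ - θ) h → 𝓑.N (γ - θ) h < δ →
      𝓑.N (γ - θ - σ) (G (x + h) - G x - DG x h) ≤ ε * 𝓑.N (γ - θ) h
  D2G_maps : ∀ θ ∈ ({0, α, 2 * α} : Set ℝ), ∀ x h k : 𝓑.E, 𝓑.Mem (γ - θ) x →
    𝓑.Mem (γ - θ) h → 𝓑.Mem (γ - θ) k → 𝓑.Mem (γ - θ - σ) (D2G x h k)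
  D2G_bound : ∀ θ ∈ ({0, α, 2 * α} : Set ℝ), ∃ C : ℝ, ∀ x h k : 𝓑.E, 𝓑.Mem (γ - θ) x →
    𝓑.Mem (γ - θ) h → 𝓑.Mem (γ - θ) k →
    𝓑.N (γ - θ - σ) (D2G x h k) ≤ C * (𝓑.N (γ - θ) h * 𝓑.N (γ - θ) k)
  D2G_isDeriv : ∀ θ ∈ ({0, α, 2 * α} : Set ℝ), ∀ x : 𝓑.E, 𝓑.Mem (γ - θ) x → ∀ ε > (0:ℝ),
    ∃ δ > (0:ℝ), ∀ h : 𝓑.E, 𝓑.Mem (γ - θ) h → 𝓑.N (γ - θ) h < δ → ∀ k : 𝓑.E,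
      𝓑.Mem (γ - θ) k →
      𝓑.N (γ - θ - σ) (DG (x + h) k - DG x k - D2G x h k) ≤ ε * (𝓑.N (γ - θ) h * 𝓑.N (γ - θ) k)
  D3G_maps : ∀ θ ∈ ({0, α, 2 * α} : Set ℝ), ∀ x h k l : 𝓑.E, 𝓑.Mem (γ - θ) x →
    𝓑.Mem (γ - θ) h → 𝓑.Mem (γ - θ) k → 𝓑.Mem (γ - θ) l → 𝓑.Mem (γ - θ - σ) (D3G x h k l)
  D3G_bound : ∀ θ ∈ ({0, α, 2 * α} : Set ℝ), ∃ C : ℝ, ∀ x h k l : 𝓑.E, 𝓑.Mem (γ - θ) x →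
    𝓑.Mem (γ - θ) h → 𝓑.Mem (γ - θ) k → 𝓑.Mem (γ - θ) l →
    𝓑.N (γ - θ - σ) (D3G x h k l) ≤ C * (𝓑.N (γ - θ) h * (𝓑.N (γ - θ) k * 𝓑.N (γ - θ) l))
  D3G_isDeriv : ∀ θ ∈ ({0, α, 2 * α} : Set ℝ), ∀ x : 𝓑.E, 𝓑.Mem (γ - θ) x → ∀ ε > (0:ℝ),
    ∃ δ > (0:ℝ), ∀ h : 𝓑.E, 𝓑.Mem (γ - θ) h → 𝓑.N (γ - θ) h < δ → ∀ k l : 𝓑.E,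
      𝓑.Mem (γ - θ) k → 𝓑.Mem (γ - θ) l →
      𝓑.N (γ - θ - σ) (D2G (x + h) k l - D2G x k l - D3G x h k l)
        ≤ ε * (𝓑.N (γ - θ) h * (𝓑.N (γ - θ) k * 𝓑.N (γ - θ) l))
  D3G_cont : ∀ θ ∈ ({0, α, 2 * α} : Set ℝ), ∀ x : 𝓑.E, 𝓑.Mem (γ - θ) x → ∀ ε > (0:ℝ),
    ∃ δ > (0:ℝ), ∀ x' : 𝓑.E, 𝓑.Mem (γ - θ) x' → 𝓑.N (γ - θ) (x' - x) < δ →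
      ∀ h k l : 𝓑.E, 𝓑.Mem (γ - θ) h → 𝓑.Mem (γ - θ) k → 𝓑.Mem (γ - θ) l →
      𝓑.N (γ - θ - σ) (D3G x' h k l - D3G x h k l)
        ≤ ε * (𝓑.N (γ - θ) h * (𝓑.N (γ - θ) k * 𝓑.N (γ - θ) l))
  DGG_deriv_bounded : ∃ (L : 𝓑.E → 𝓑.E →ₗ[ℝ] 𝓑.E) (C : ℝ),
    (∀ x h : 𝓑.E, 𝓑.Mem (γ - α) x → 𝓑.Mem (γ - α) h →
      𝓑.Mem (γ - 2 * α - σ) (L x h) ∧ 𝓑.N (γ - 2 * α - σ) (L x h) ≤ C * 𝓑.N (γ - α) h) ∧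
    ∀ x : 𝓑.E, 𝓑.Mem (γ - α) x → ∀ ε > (0:ℝ), ∃ δ > (0:ℝ), ∀ h : 𝓑.E, 𝓑.Mem (γ - α) h →
      𝓑.N (γ - α) h < δ →
      𝓑.N (γ - 2 * α - σ) (DG (x + h) (G (x + h)) - DG x (G x) - L x h) ≤ ε * 𝓑.N (γ - α) h

/-- `y` is a (mild) solution on `[0,T']` of the rough evolution equation
`dy = (Ay + F(y))dt + G(y)d𝐗`, `y(0) = y₀`: the pair `(y, G(y))` is a controlled rough
path in `D^{2α}_{X,γ}([0,T'])` and the mild formulation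
`y_t = S(t)y₀ + ∫₀ᵗ S(t-s)F(y_s)ds + ∫₀ᵗ S(t-s)G(y_s)d𝐗_s` holds, the rough convolution
being the limit of the compensated Riemann sums
`Σ S(t-u)[G(y_u)X_{u,v} + DG(y_u)G(y_u)X⁽²⁾_{u,v}]`. -/
structure IsSolution (𝓑 : BanachScale) (Sg : ScaleSemigroup 𝓑) (α γ : ℝ)
    (X : ℝ → ℝ) (X2 : ℝ → ℝ → ℝ) (F G : 𝓑.E → 𝓑.E) (DG : 𝓑.E → 𝓑.E →ₗ[ℝ] 𝓑.E)
    (y₀ : 𝓑.E) (T' : ℝ) (y : ℝ → 𝓑.E) : Prop where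
  controlled : IsControlledPath 𝓑 α γ T' X y fun t => G (y t)
  init : y 0 = y₀
  mild : ∀ t : ℝ, 0 < t → t ≤ T' → ∃ D Z : 𝓑.E,
    IsRiemannIntegral 𝓑 γ (fun s => Sg.S (t - s) (F (y s))) 0 t D ∧
    IsRoughConvolution 𝓑 Sg X X2 (fun s => G (y s)) (fun s => DG (y s) (G (y s)))
      (γ - 2 * α) 0 t Z ∧
    y t = Sg.S t y₀ + D + Z

/-- The Borel σ-algebra of `B_θ`, generated by the `|·|_θ`-balls of `B_θ`,
as a σ-algebra on the ambient space. -/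
def scaleBorel (𝓑 : BanachScale) (θ : ℝ) : MeasurableSpace 𝓑.E :=
  MeasurableSpace.generateFrom
    {s : Set 𝓑.E | ∃ (c : 𝓑.E) (r : ℝ), s = {x | 𝓑.Mem θ x ∧ 𝓑.N θ (x - c) < r}}

/-! Everything rests on one mean value inequality between two levels of the scale: a map whose
derivative is bounded `B_θ → B_θ'` along a segment is Lipschitz there. It is applied to `G`, to
`x ↦ DG(x)k`, to `x ↦ DG(x)G(x)`, and, for the `2α`-remainder of `G(y)`, to `G` on the segment
from `y_s` to `y_t` with `X_{s,t} DG(y_s)G(y_s)` subtracted. Expanding `G` to second order would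
produce the quadratic term `D²G(y)[y_t - y_s, y_t - y_s]`; instead, with
`y_t - y_s = R^y_{s,t} + X_{s,t} G(y_s)`, the integrand splits as
`DG(x)R^y_{s,t} + X_{s,t}(DG(x)G(x) - DG(y_s)G(y_s)) + X_{s,t} DG(x)(G(y_s) - G(x))`, and the
bounded derivative of `x ↦ DG(x)G(x)` leaves a single factor `|y_t - y_s|_{γ-α}`, itself at most
`(1 + ‖X‖_α) ‖y, G(y)‖ (t-s)^α`. -/

open Topology

namespace BanachScale

variable (𝓑 : BanachScale)

lemma N_neg (θ : ℝ) (x : 𝓑.E) : 𝓑.N θ (-x) = 𝓑.N θ x := by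
  rw [← neg_one_smul ℝ x, 𝓑.N_smul, abs_neg, abs_one, one_mul]

lemma N_sub_comm (θ : ℝ) (x y : 𝓑.E) : 𝓑.N θ (x - y) = 𝓑.N θ (y - x) := by
  rw [← 𝓑.N_neg θ (y - x), neg_sub]

variable {𝓑} {θ : ℝ} {x y : 𝓑.E}

lemma mem_sub (hx : 𝓑.Mem θ x) (hy : 𝓑.Mem θ y) : 𝓑.Mem θ (x - y) := by
  rw [sub_eq_add_neg]
  exact 𝓑.mem_add θ _ _ hx (𝓑.mem_neg θ _ hy)

lemma N_sub_le (hx : 𝓑.Mem θ x) (hy : 𝓑.Mem θ y) : 𝓑.N θ (x - y) ≤ 𝓑.N θ x + 𝓑.N θ y := by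
  rw [sub_eq_add_neg, ← 𝓑.N_neg θ y]
  exact 𝓑.N_add θ x (-y) hx (𝓑.mem_neg θ _ hy)

lemma N_le_N_add_N_sub (hx : 𝓑.Mem θ x) (hy : 𝓑.Mem θ y) :
    𝓑.N θ x ≤ 𝓑.N θ y + 𝓑.N θ (x - y) := by
  simpa using 𝓑.N_add θ y (x - y) hy (mem_sub hx hy)

lemma abs_N_sub_N_le (hx : 𝓑.Mem θ x) (hy : 𝓑.Mem θ y) :
    |𝓑.N θ x - 𝓑.N θ y| ≤ 𝓑.N θ (x - y) := by
  have h₁ := N_le_N_add_N_sub hx hy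
  have h₂ := N_le_N_add_N_sub hy hx
  rw [N_sub_comm] at h₂
  exact abs_sub_le_iff.2 ⟨by linarith, by linarith⟩

def HasFDerivAtLevels (𝓑 : BanachScale) (θ θ' : ℝ) (F : 𝓑.E → 𝓑.E) (L : 𝓑.E →ₗ[ℝ] 𝓑.E)
    (x : 𝓑.E) : Prop :=
  ∀ ε > (0:ℝ), ∃ δ > (0:ℝ), ∀ h : 𝓑.E, 𝓑.Mem θ h → 𝓑.N θ h < δ →
    𝓑.N θ' (F (x + h) - F x - L h) ≤ ε * 𝓑.N θ h

theorem N_sub_le_mul_of_forall_near {c : ℝ → 𝓑.E} {B a b : ℝ} (hab : a ≤ b)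
    (hc : ∀ t ∈ Icc a b, 𝓑.Mem θ (c t))
    (hnear : ∀ t ∈ Icc a b, ∀ ε > (0:ℝ), ∃ δ > (0:ℝ), ∀ t' ∈ Icc a b, |t' - t| < δ →
      𝓑.N θ (c t' - c t) ≤ (B + ε) * |t' - t|) :
    𝓑.N θ (c b - c a) ≤ B * (b - a) := by
  set f : ℝ → ℝ := fun t => 𝓑.N θ (c t - c a)
  have hf : ∀ t ∈ Icc a b, ∀ t' ∈ Icc a b, f t' - f t ≤ 𝓑.N θ (c t' - c t) ∧
      f t - f t' ≤ 𝓑.N θ (c t' - c t) := by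
    intro t ht t' ht'
    have hca := hc a ⟨le_rfl, hab⟩
    have key := abs_N_sub_N_le (mem_sub (hc t' ht') hca) (mem_sub (hc t ht) hca)
    rw [sub_sub_sub_cancel_right] at key
    exact abs_sub_le_iff.1 key
  have hcont : ContinuousOn f (Icc a b) := by
    intro t ht
    rw [Metric.continuousWithinAt_iff]
    intro ε hε
    obtain ⟨δ, hδ, hδ'⟩ := hnear t ht 1 one_pos
    refine ⟨min δ (ε / (|B + 1| + 1)), lt_min hδ (by positivity), fun t' ht' hdist => ?_⟩
    rw [Real.dist_eq] at hdist ⊢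
    have hlt : |t' - t| < δ := hdist.trans_le (min_le_left _ _)
    have hlt' : |t' - t| < ε / (|B + 1| + 1) := hdist.trans_le (min_le_right _ _)
    have hbound := hδ' t' ht' hlt
    calc |f t' - f t| ≤ 𝓑.N θ (c t' - c t) := abs_sub_le_iff.2 (hf t ht t' ht')
      _ ≤ (|B + 1| + 1) * |t' - t| := by nlinarith [le_abs_self (B + 1), abs_nonneg (t' - t)]
      _ < ε := by rwa [← lt_div_iff₀' (by positivity)]
  have hslope : ∀ t ∈ Ico a b, ∀ r, B < r → ∃ᶠ z in 𝓝[>] t, slope f t z < r := by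
    intro t ht r hr
    obtain ⟨δ, hδ, hδ'⟩ := hnear t (Ico_subset_Icc_self ht) ((r - B) / 2) (by linarith)
    refine Filter.Eventually.frequently ?_
    filter_upwards [Ioo_mem_nhdsGT (lt_min (lt_add_of_pos_right t hδ) ht.2)] with z hz
    have hz' : z ∈ Icc a b := ⟨ht.1.trans hz.1.le, hz.2.le.trans (min_le_right _ _)⟩
    have hzt : |z - t| < δ := by
      rw [abs_of_pos (sub_pos.2 hz.1)]
      linarith [hz.2.trans_le (min_le_left _ _)]
    have hbound := (hf t (Ico_subset_Icc_self ht) z hz').1.trans (hδ' z hz' hzt)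
    rw [abs_of_pos (sub_pos.2 hz.1)] at hbound
    rw [slope_def_field, div_lt_iff₀ (sub_pos.2 hz.1)]
    nlinarith [sub_pos.2 hz.1]
  exact image_le_of_liminf_slope_right_le_deriv_boundary hcont (B := fun t => B * (t - a))
    (by simp [f, 𝓑.N_zero]) (by fun_prop)
    (fun t _ => ((hasDerivWithinAt_id t _).sub_const a).const_mul B) (by simpa using hslope)
    ⟨hab, le_rfl⟩

theorem N_sub_sub_le_of_hasFDerivAtLevels {θ' B : ℝ} {F : 𝓑.E → 𝓑.E}
    {DF : 𝓑.E → 𝓑.E →ₗ[ℝ] 𝓑.E} {a h v : 𝓑.E} (hh : 𝓑.Mem θ h) (hv : 𝓑.Mem θ' v)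
    (hF : ∀ t ∈ Icc (0:ℝ) 1, 𝓑.Mem θ' (F (a + t • h)))
    (hDF : ∀ t ∈ Icc (0:ℝ) 1, 𝓑.Mem θ' (DF (a + t • h) h))
    (hderiv : ∀ t ∈ Icc (0:ℝ) 1, 𝓑.HasFDerivAtLevels θ θ' F (DF (a + t • h)) (a + t • h))
    (hB : ∀ t ∈ Icc (0:ℝ) 1, 𝓑.N θ' (DF (a + t • h) h - v) ≤ B) :
    𝓑.N θ' (F (a + h) - F a - v) ≤ B := by
  set c : ℝ → 𝓑.E := fun t => F (a + t • h) - t • v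
  have hc : ∀ t ∈ Icc (0:ℝ) 1, 𝓑.Mem θ' (c t) :=
    fun t ht => mem_sub (hF t ht) (𝓑.mem_smul θ' t v hv)
  have hnear : ∀ t ∈ Icc (0:ℝ) 1, ∀ ε > (0:ℝ), ∃ δ > (0:ℝ), ∀ t' ∈ Icc (0:ℝ) 1,
      |t' - t| < δ → 𝓑.N θ' (c t' - c t) ≤ (B + ε) * |t' - t| := by
    intro t ht ε hε
    have hNh : 0 < 𝓑.N θ h + 1 := by linarith [𝓑.N_nonneg θ h]
    obtain ⟨δ, hδ, hδ'⟩ := hderiv t ht (ε / (𝓑.N θ h + 1)) (by positivity)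
    refine ⟨δ / (𝓑.N θ h + 1), by positivity, fun t' ht' hlt => ?_⟩
    have hw : 𝓑.N θ ((t' - t) • h) < δ := by
      rw [𝓑.N_smul]
      rw [lt_div_iff₀ hNh] at hlt
      nlinarith [abs_nonneg (t' - t)]
    have hlin := hδ' _ (𝓑.mem_smul θ _ h hh) hw
    rw [add_assoc, ← add_smul, add_sub_cancel, map_smul, 𝓑.N_smul] at hlin
    have hsplit : c t' - c t = (F (a + t' • h) - F (a + t • h) - (t' - t) • DF (a + t • h) h)
        + (t' - t) • (DF (a + t • h) h - v) := by
      simp only [c, smul_sub, sub_smul]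
      abel
    rw [hsplit]
    refine (𝓑.N_add θ' _ _ (mem_sub (mem_sub (hF t' ht') (hF t ht))
      (𝓑.mem_smul θ' _ _ (hDF t ht))) (𝓑.mem_smul θ' _ _ (mem_sub (hDF t ht) hv))).trans ?_
    rw [𝓑.N_smul]
    have hεh : ε / (𝓑.N θ h + 1) * 𝓑.N θ h ≤ ε := by
      rw [div_mul_eq_mul_div, div_le_iff₀ hNh]
      nlinarith [𝓑.N_nonneg θ h]
    have := mul_le_mul_of_nonneg_left (hB t ht) (abs_nonneg (t' - t))
    nlinarith [abs_nonneg (t' - t)]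
  have key := N_sub_le_mul_of_forall_near zero_le_one hc hnear
  simpa [c, sub_sub, add_comm] using key

theorem N_sub_le_of_hasFDerivAtLevels {θ' C : ℝ} {F : 𝓑.E → 𝓑.E}
    {DF : 𝓑.E → 𝓑.E →ₗ[ℝ] 𝓑.E}
    (hF : ∀ x, 𝓑.Mem θ x → 𝓑.Mem θ' (F x))
    (hDF : ∀ x h, 𝓑.Mem θ x → 𝓑.Mem θ h → 𝓑.Mem θ' (DF x h))
    (hbound : ∀ x h, 𝓑.Mem θ x → 𝓑.Mem θ h → 𝓑.N θ' (DF x h) ≤ C * 𝓑.N θ h)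
    (hderiv : ∀ x, 𝓑.Mem θ x → 𝓑.HasFDerivAtLevels θ θ' F (DF x) x)
    (hx : 𝓑.Mem θ x) (hy : 𝓑.Mem θ y) :
    𝓑.N θ' (F y - F x) ≤ C * 𝓑.N θ (y - x) := by
  have hseg : ∀ t ∈ Icc (0:ℝ) 1, 𝓑.Mem θ (x + t • (y - x)) :=
    fun t _ => 𝓑.mem_add θ _ _ hx (𝓑.mem_smul θ t _ (mem_sub hy hx))
  have key := N_sub_sub_le_of_hasFDerivAtLevels (v := 0) (mem_sub hy hx) (𝓑.mem_zero θ')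
    (fun t ht => hF _ (hseg t ht)) (fun t ht => hDF _ _ (hseg t ht) (mem_sub hy hx))
    (fun t ht => hderiv _ (hseg t ht))
    (fun t ht => by simpa using hbound _ _ (hseg t ht) (mem_sub hy hx))
  simpa using key

/-- The continuity clause of `IsControlledPath`, as a predicate. -/
def LevelContinuousOn (𝓑 : BanachScale) (θ T : ℝ) (f : ℝ → 𝓑.E) : Prop :=
  ∀ t : ℝ, 0 ≤ t → t ≤ T → ∀ ε > (0:ℝ), ∃ δ > (0:ℝ), ∀ s : ℝ, 0 ≤ s → s ≤ T →
    |s - t| < δ → 𝓑.N θ (f s - f t) < ε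

theorem LevelContinuousOn.of_N_sub_le {θ' T : ℝ} {f g : ℝ → 𝓑.E}
    (hf : 𝓑.LevelContinuousOn θ T f)
    (h : ∀ t, 0 ≤ t → t ≤ T → ∃ A : ℝ, ∀ s, 0 ≤ s → s ≤ T →
      𝓑.N θ' (g s - g t) ≤ A * 𝓑.N θ (f s - f t)) :
    𝓑.LevelContinuousOn θ' T g := by
  intro t ht₀ htT ε hε
  obtain ⟨A, hA⟩ := h t ht₀ htT
  obtain ⟨δ, hδ, hδ'⟩ := hf t ht₀ htT (ε / (|A| + 1)) (by positivity)
  refine ⟨δ, hδ, fun s hs₀ hsT hst => ?_⟩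
  have hfs := hδ' s hs₀ hsT hst
  rw [lt_div_iff₀ (by positivity)] at hfs
  calc 𝓑.N θ' (g s - g t) ≤ A * 𝓑.N θ (f s - f t) := hA s hs₀ hsT
    _ ≤ |A| * 𝓑.N θ (f s - f t) :=
      mul_le_mul_of_nonneg_right (le_abs_self A) (𝓑.N_nonneg _ _)
    _ < ε := by nlinarith [𝓑.N_nonneg θ (f s - f t)]

theorem LevelContinuousOn.bddAbove {T : ℝ} {f : ℝ → 𝓑.E}
    (hf : 𝓑.LevelContinuousOn θ T f) (hmem : ∀ t, 0 ≤ t → t ≤ T → 𝓑.Mem θ (f t)) :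
    BddAbove {r : ℝ | ∃ t : ℝ, 0 ≤ t ∧ t ≤ T ∧ r = 𝓑.N θ (f t)} := by
  have hcont : ContinuousOn (fun t => 𝓑.N θ (f t)) (Icc 0 T) := by
    intro t ht
    rw [Metric.continuousWithinAt_iff]
    intro ε hε
    obtain ⟨δ, hδ, hδ'⟩ := hf t ht.1 ht.2 ε hε
    exact ⟨δ, hδ, fun s hs hst => (abs_N_sub_N_le (hmem s hs.1 hs.2) (hmem t ht.1 ht.2)).trans_lt
      (hδ' s hs.1 hs.2 hst)⟩
  refine (isCompact_Icc.bddAbove_image hcont).mono ?_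
  rintro r ⟨t, ht₀, htT, rfl⟩
  exact ⟨t, ⟨ht₀, htT⟩, rfl⟩

end BanachScale

open BanachScale

section Seminorms

variable {𝓑 : BanachScale} {θ η T : ℝ}

lemma scaleSupNorm_nonneg (f : ℝ → 𝓑.E) : 0 ≤ scaleSupNorm 𝓑 θ T f := by
  apply Real.sSup_nonneg
  rintro r ⟨t, -, -, rfl⟩
  exact 𝓑.N_nonneg _ _

lemma scaleSupNorm_le {f : ℝ → 𝓑.E} {B : ℝ} (hB : 0 ≤ B)
    (h : ∀ t, 0 ≤ t → t ≤ T → 𝓑.N θ (f t) ≤ B) : scaleSupNorm 𝓑 θ T f ≤ B := by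
  apply Real.sSup_le _ hB
  rintro r ⟨t, ht₀, htT, rfl⟩
  exact h t ht₀ htT

lemma N_le_scaleSupNorm {f : ℝ → 𝓑.E} (hf : 𝓑.LevelContinuousOn θ T f)
    (hmem : ∀ t, 0 ≤ t → t ≤ T → 𝓑.Mem θ (f t)) {t : ℝ} (ht₀ : 0 ≤ t) (htT : t ≤ T) :
    𝓑.N θ (f t) ≤ scaleSupNorm 𝓑 θ T f :=
  le_csSup (hf.bddAbove hmem) ⟨t, ht₀, htT, rfl⟩

lemma scaleHolderNorm2_nonneg (F : ℝ → ℝ → 𝓑.E) : 0 ≤ scaleHolderNorm2 𝓑 θ η T F := by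
  apply Real.sSup_nonneg
  rintro r ⟨s, t, -, hst, -, rfl⟩
  exact div_nonneg (𝓑.N_nonneg _ _) (Real.rpow_nonneg (sub_nonneg.2 hst.le) _)

lemma scaleHolderNorm2_le {F : ℝ → ℝ → 𝓑.E} {B : ℝ} (hB : 0 ≤ B)
    (h : ∀ s t, 0 ≤ s → s < t → t ≤ T → 𝓑.N θ (F s t) ≤ B * (t - s) ^ η) :
    scaleHolderNorm2 𝓑 θ η T F ≤ B := by
  apply Real.sSup_le _ hB
  rintro r ⟨s, t, hs₀, hst, htT, rfl⟩
  rw [div_le_iff₀ (Real.rpow_pos_of_pos (sub_pos.2 hst) _)]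
  exact h s t hs₀ hst htT

lemma N_le_scaleHolderNorm2 {F : ℝ → ℝ → 𝓑.E} (hdiag : ∀ s, F s s = 0)
    (hF : ∃ C : ℝ, ∀ s t, 0 ≤ s → s ≤ t → t ≤ T → 𝓑.N θ (F s t) ≤ C * (t - s) ^ η)
    {s t : ℝ} (hs₀ : 0 ≤ s) (hst : s ≤ t) (htT : t ≤ T) :
    𝓑.N θ (F s t) ≤ scaleHolderNorm2 𝓑 θ η T F * (t - s) ^ η := by
  rcases hst.eq_or_lt with rfl | hst
  · rw [hdiag, 𝓑.N_zero]
    exact mul_nonneg (scaleHolderNorm2_nonneg F) (Real.rpow_nonneg (sub_self s).ge _)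
  obtain ⟨C, hC⟩ := hF
  have hpos : 0 < (t - s) ^ η := Real.rpow_pos_of_pos (sub_pos.2 hst) _
  have hbdd : BddAbove {r : ℝ | ∃ s t : ℝ, 0 ≤ s ∧ s < t ∧ t ≤ T ∧
      r = 𝓑.N θ (F s t) / (t - s) ^ η} := by
    refine ⟨C, ?_⟩
    rintro r ⟨s, t, hs₀, hst, htT, rfl⟩
    exact (div_le_iff₀ (Real.rpow_pos_of_pos (sub_pos.2 hst) _)).2 (hC s t hs₀ hst.le htT)
  rw [← div_le_iff₀ hpos]
  exact le_csSup hbdd ⟨s, t, hs₀, hst, htT, rfl⟩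

end Seminorms

section ControlledPaths

variable {𝓑 : BanachScale} {α γ T : ℝ} {X : ℝ → ℝ} {y y' : ℝ → 𝓑.E}

lemma components_le_crpNorm :
    scaleSupNorm 𝓑 γ T y ≤ crpNorm 𝓑 α γ T X y y' ∧
      scaleSupNorm 𝓑 (γ - α) T y' ≤ crpNorm 𝓑 α γ T X y y' ∧
      scaleHolderNorm2 𝓑 (γ - α) α T (gubRemainder 𝓑 X y y') ≤ crpNorm 𝓑 α γ T X y y' ∧
      scaleHolderNorm2 𝓑 (γ - 2 * α) (2 * α) T (gubRemainder 𝓑 X y y')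
        ≤ crpNorm 𝓑 α γ T X y y' := by
  have h₁ : 0 ≤ scaleSupNorm 𝓑 γ T y := scaleSupNorm_nonneg _
  have h₂ : 0 ≤ scaleSupNorm 𝓑 (γ - α) T y' := scaleSupNorm_nonneg _
  have h₃ : 0 ≤ scaleHolderNorm 𝓑 (γ - 2 * α) α T y' := scaleHolderNorm2_nonneg _
  have h₄ : 0 ≤ scaleHolderNorm2 𝓑 (γ - α) α T (gubRemainder 𝓑 X y y') :=
    scaleHolderNorm2_nonneg _
  have h₅ : 0 ≤ scaleHolderNorm2 𝓑 (γ - 2 * α) (2 * α) T (gubRemainder 𝓑 X y y') :=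
    scaleHolderNorm2_nonneg _
  unfold crpNorm
  exact ⟨by linarith, by linarith, by linarith, by linarith⟩

lemma crpNorm_nonneg : 0 ≤ crpNorm 𝓑 α γ T X y y' :=
  (scaleSupNorm_nonneg y).trans components_le_crpNorm.1

lemma crpNorm_le_of_bounds {A₁ A₂ A₃ A₄ A₅ : ℝ} (h₁ : 0 ≤ A₁) (h₂ : 0 ≤ A₂) (h₃ : 0 ≤ A₃)
    (h₄ : 0 ≤ A₄) (h₅ : 0 ≤ A₅)
    (hy : ∀ t, 0 ≤ t → t ≤ T → 𝓑.N γ (y t) ≤ A₁)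
    (hy' : ∀ t, 0 ≤ t → t ≤ T → 𝓑.N (γ - α) (y' t) ≤ A₂)
    (hy'_holder : ∀ s t, 0 ≤ s → s ≤ t → t ≤ T →
      𝓑.N (γ - 2 * α) (y' t - y' s) ≤ A₃ * (t - s) ^ α)
    (hR : ∀ s t, 0 ≤ s → s ≤ t → t ≤ T →
      𝓑.N (γ - α) (gubRemainder 𝓑 X y y' s t) ≤ A₄ * (t - s) ^ α)
    (hR₂ : ∀ s t, 0 ≤ s → s ≤ t → t ≤ T →
      𝓑.N (γ - 2 * α) (gubRemainder 𝓑 X y y' s t) ≤ A₅ * (t - s) ^ (2 * α)) :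
    crpNorm 𝓑 α γ T X y y' ≤ A₁ + A₂ + A₃ + A₄ + A₅ :=
  add_le_add (add_le_add (add_le_add (add_le_add (scaleSupNorm_le h₁ hy)
    (scaleSupNorm_le h₂ hy'))
    (scaleHolderNorm2_le h₃ fun s t hs₀ hst htT => hy'_holder s t hs₀ hst.le htT))
    (scaleHolderNorm2_le h₄ fun s t hs₀ hst htT => hR s t hs₀ hst.le htT))
    (scaleHolderNorm2_le h₅ fun s t hs₀ hst htT => hR₂ s t hs₀ hst.le htT)

namespace IsControlledPath

variable {s t : ℝ}

lemma N_le_crpNorm (hy : IsControlledPath 𝓑 α γ T X y y') (ht₀ : 0 ≤ t) (htT : t ≤ T) :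
    𝓑.N γ (y t) ≤ crpNorm 𝓑 α γ T X y y' :=
  (N_le_scaleSupNorm hy.cont_y hy.mem_y ht₀ htT).trans components_le_crpNorm.1

lemma N_deriv_le_crpNorm (hy : IsControlledPath 𝓑 α γ T X y y') (ht₀ : 0 ≤ t) (htT : t ≤ T) :
    𝓑.N (γ - α) (y' t) ≤ crpNorm 𝓑 α γ T X y y' :=
  (N_le_scaleSupNorm hy.cont_y' hy.mem_y' ht₀ htT).trans components_le_crpNorm.2.1

lemma N_remainder_le_crpNorm (hy : IsControlledPath 𝓑 α γ T X y y') (hs₀ : 0 ≤ s) (hst : s ≤ t)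
    (htT : t ≤ T) :
    𝓑.N (γ - α) (gubRemainder 𝓑 X y y' s t) ≤ crpNorm 𝓑 α γ T X y y' * (t - s) ^ α :=
  (N_le_scaleHolderNorm2 (by simp [gubRemainder]) hy.rem_alpha hs₀ hst htT).trans
    (mul_le_mul_of_nonneg_right components_le_crpNorm.2.2.1 (Real.rpow_nonneg (sub_nonneg.2 hst) _))

lemma N_remainder_le_crpNorm_two (hy : IsControlledPath 𝓑 α γ T X y y') (hs₀ : 0 ≤ s)
    (hst : s ≤ t) (htT : t ≤ T) :
    𝓑.N (γ - 2 * α) (gubRemainder 𝓑 X y y' s t)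
      ≤ crpNorm 𝓑 α γ T X y y' * (t - s) ^ (2 * α) :=
  (N_le_scaleHolderNorm2 (by simp [gubRemainder]) hy.rem_two_alpha hs₀ hst htT).trans
    (mul_le_mul_of_nonneg_right components_le_crpNorm.2.2.2 (Real.rpow_nonneg (sub_nonneg.2 hst) _))

lemma N_sub_le_crpNorm (hy : IsControlledPath 𝓑 α γ T X y y') (hα : 0 ≤ α) {CX : ℝ}
    (hX : ∀ s t, 0 ≤ s → s ≤ t → t ≤ T → |X t - X s| ≤ CX * (t - s) ^ α)
    (hs₀ : 0 ≤ s) (hst : s ≤ t) (htT : t ≤ T) :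
    𝓑.N (γ - α) (y t - y s) ≤ (1 + CX) * crpNorm 𝓑 α γ T X y y' * (t - s) ^ α := by
  have hsT := hst.trans htT
  have ht₀ := hs₀.trans hst
  have hmem : ∀ u, 0 ≤ u → u ≤ T → 𝓑.Mem (γ - α) (y u) :=
    fun u hu₀ huT => 𝓑.mem_mono (by linarith) _ (hy.mem_y u hu₀ huT)
  have hsplit : y t - y s = gubRemainder 𝓑 X y y' s t + (X t - X s) • y' s := by
    simp only [gubRemainder]
    abel
  have hRmem : 𝓑.Mem (γ - α) (gubRemainder 𝓑 X y y' s t) :=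
    mem_sub (mem_sub (hmem t ht₀ htT) (hmem s hs₀ hsT)) (𝓑.mem_smul _ _ _ (hy.mem_y' s hs₀ hsT))
  rw [hsplit]
  refine (𝓑.N_add _ _ _ hRmem (𝓑.mem_smul _ _ _ (hy.mem_y' s hs₀ hsT))).trans ?_
  rw [𝓑.N_smul]
  have hR := hy.N_remainder_le_crpNorm hs₀ hst htT
  have hXst := mul_le_mul (hX s t hs₀ hst htT) (hy.N_deriv_le_crpNorm hs₀ hsT)
    (𝓑.N_nonneg _ _) ((abs_nonneg _).trans (hX s t hs₀ hst htT))
  linarith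

end IsControlledPath

end ControlledPaths

/-- The quantitative consequences of assumption (G), and one embedding of the scale, with a
single constant `K`. -/
structure CoefficientBounds (𝓑 : BanachScale) (α σ γ : ℝ) (G : 𝓑.E → 𝓑.E)
    (DG : 𝓑.E → 𝓑.E →ₗ[ℝ] 𝓑.E) (K : ℝ) : Prop where
  nonneg : 0 ≤ K
  N_G_zero_le : 𝓑.N (γ - σ) (G 0) ≤ K
  lipschitz : ∀ x y, 𝓑.Mem γ x → 𝓑.Mem γ y → 𝓑.N (γ - σ) (G y - G x) ≤ K * 𝓑.N γ (y - x)
  lipschitz_alpha : ∀ x y, 𝓑.Mem (γ - α) x → 𝓑.Mem (γ - α) y →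
    𝓑.N (γ - α - σ) (G y - G x) ≤ K * 𝓑.N (γ - α) (y - x)
  N_DG_le_alpha : ∀ x h, 𝓑.Mem (γ - α) x → 𝓑.Mem (γ - α) h →
    𝓑.N (γ - α - σ) (DG x h) ≤ K * 𝓑.N (γ - α) h
  N_DG_le_two_alpha : ∀ x h, 𝓑.Mem (γ - 2 * α) x → 𝓑.Mem (γ - 2 * α) h →
    𝓑.N (γ - 2 * α - σ) (DG x h) ≤ K * 𝓑.N (γ - 2 * α) h
  lipschitz_DG : ∀ k x y, 𝓑.Mem (γ - α) k → 𝓑.Mem (γ - α) x → 𝓑.Mem (γ - α) y →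
    𝓑.N (γ - α - σ) (DG y k - DG x k) ≤ K * 𝓑.N (γ - α) k * 𝓑.N (γ - α) (y - x)
  lipschitz_DGG : ∀ x y, 𝓑.Mem (γ - α) x → 𝓑.Mem (γ - α) y →
    𝓑.N (γ - 2 * α - σ) (DG y (G y) - DG x (G x)) ≤ K * 𝓑.N (γ - α) (y - x)
  N_le_embed : ∀ x, 𝓑.Mem (γ - α - σ) x → 𝓑.N (γ - 2 * α) x ≤ K * 𝓑.N (γ - α - σ) x

namespace AssumptionG

variable {𝓑 : BanachScale} {α σ γ : ℝ} {G : 𝓑.E → 𝓑.E} {DG : 𝓑.E → 𝓑.E →ₗ[ℝ] 𝓑.E}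
  {D2G : 𝓑.E → 𝓑.E →ₗ[ℝ] 𝓑.E →ₗ[ℝ] 𝓑.E} {D3G : 𝓑.E → 𝓑.E →ₗ[ℝ] 𝓑.E →ₗ[ℝ] 𝓑.E →ₗ[ℝ] 𝓑.E}

lemma exists_lipschitz (hG : AssumptionG 𝓑 α σ γ G DG D2G D3G) {θ : ℝ}
    (hθ : θ ∈ ({0, α, 2 * α} : Set ℝ)) :
    ∃ C : ℝ, ∀ x y, 𝓑.Mem (γ - θ) x → 𝓑.Mem (γ - θ) y →
      𝓑.N (γ - θ - σ) (G y - G x) ≤ C * 𝓑.N (γ - θ) (y - x) :=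
  let ⟨C, hC⟩ := hG.DG_bound θ hθ
  ⟨C, fun _ _ hx hy => N_sub_le_of_hasFDerivAtLevels (hG.maps θ hθ) (hG.DG_maps θ hθ) hC
    (hG.DG_isDeriv θ hθ) hx hy⟩

lemma exists_lipschitz_DG (hG : AssumptionG 𝓑 α σ γ G DG D2G D3G) :
    ∃ C : ℝ, ∀ k x y, 𝓑.Mem (γ - α) k → 𝓑.Mem (γ - α) x → 𝓑.Mem (γ - α) y →
      𝓑.N (γ - α - σ) (DG y k - DG x k) ≤ C * 𝓑.N (γ - α) k * 𝓑.N (γ - α) (y - x) := by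
  have hα : α ∈ ({0, α, 2 * α} : Set ℝ) := by simp
  obtain ⟨C, hC⟩ := hG.D2G_bound α hα
  refine ⟨C, fun k x y hk hx hy => ?_⟩
  refine N_sub_le_of_hasFDerivAtLevels (F := fun x => DG x k) (DF := fun x => (D2G x).flip k)
    (fun x hx => hG.DG_maps α hα x k hx hk) (fun x h hx hh => hG.D2G_maps α hα x h k hx hh hk)
    (fun x h hx hh => ?_) (fun x hx ε hε => ?_) hx hy
  · simpa [mul_comm, mul_assoc, mul_left_comm] using hC x h k hx hh hk
  · have hNk : 0 < 𝓑.N (γ - α) k + 1 := by linarith [𝓑.N_nonneg (γ - α) k]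
    obtain ⟨δ, hδ, hδ'⟩ := hG.D2G_isDeriv α hα x hx (ε / (𝓑.N (γ - α) k + 1)) (by positivity)
    refine ⟨δ, hδ, fun h hh hhδ => (hδ' h hh hhδ k hk).trans ?_⟩
    rw [div_mul_eq_mul_div, div_le_iff₀ hNk]
    nlinarith [𝓑.N_nonneg (γ - α) k, mul_nonneg hε.le (𝓑.N_nonneg (γ - α) h)]

lemma exists_lipschitz_DGG (hG : AssumptionG 𝓑 α σ γ G DG D2G D3G) (hα : 0 ≤ α)
    (hσα : σ ≤ α) :
    ∃ C : ℝ, ∀ x y, 𝓑.Mem (γ - α) x → 𝓑.Mem (γ - α) y →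
      𝓑.N (γ - 2 * α - σ) (DG y (G y) - DG x (G x)) ≤ C * 𝓑.N (γ - α) (y - x) := by
  obtain ⟨L, C, hL, hLderiv⟩ := hG.DGG_deriv_bounded
  refine ⟨C, fun x y hx hy => N_sub_le_of_hasFDerivAtLevels (F := fun x => DG x (G x)) (DF := L)
    (fun x hx => ?_) (fun x h hx hh => (hL x h hx hh).1) (fun x h hx hh => (hL x h hx hh).2)
    hLderiv hx hy⟩
  exact hG.DG_maps (2 * α) (by simp) x (G x) (𝓑.mem_mono (by linarith) x hx)
    (𝓑.mem_mono (by linarith) _ (hG.maps α (by simp) x hx))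

theorem exists_coefficientBounds (hG : AssumptionG 𝓑 α σ γ G DG D2G D3G) (hα : 0 ≤ α)
    (hσα : σ ≤ α) :
    ∃ K, CoefficientBounds 𝓑 α σ γ G DG K := by
  obtain ⟨C₀, hC₀⟩ := hG.exists_lipschitz (θ := 0) (by simp)
  simp only [sub_zero] at hC₀
  obtain ⟨C₁, hC₁⟩ := hG.exists_lipschitz (θ := α) (by simp)
  obtain ⟨B₁, hB₁⟩ := hG.DG_bound α (by simp)
  obtain ⟨B₂, hB₂⟩ := hG.DG_bound (2 * α) (by simp)
  obtain ⟨D, hD⟩ := hG.exists_lipschitz_DG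
  obtain ⟨L, hL⟩ := hG.exists_lipschitz_DGG hα hσα
  obtain ⟨E, -, hE⟩ := 𝓑.embed_bound (show γ - 2 * α ≤ γ - α - σ by linarith)
  set K := |C₀| + |C₁| + |B₁| + |B₂| + |D| + |L| + |E| + 𝓑.N (γ - σ) (G 0)
  have hK : ∀ c ∈ ({C₀, C₁, B₁, B₂, D, L, E} : Set ℝ), c ≤ K := by
    simp only [mem_insert_iff, mem_singleton_iff, forall_eq_or_imp, forall_eq, K]
    refine ⟨?_, ?_, ?_, ?_, ?_, ?_, ?_⟩ <;>
      linarith [le_abs_self C₀, le_abs_self C₁, le_abs_self B₁, le_abs_self B₂, le_abs_self D,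
        le_abs_self L, le_abs_self E, abs_nonneg C₀, abs_nonneg C₁, abs_nonneg B₁,
        abs_nonneg B₂, abs_nonneg D, abs_nonneg L, abs_nonneg E, 𝓑.N_nonneg (γ - σ) (G 0)]
  have hmul : ∀ {a b c : ℝ}, c ∈ ({C₀, C₁, B₁, B₂, D, L, E} : Set ℝ) → 0 ≤ b →
      a ≤ c * b → a ≤ K * b :=
    fun hc hb h => h.trans (mul_le_mul_of_nonneg_right (hK _ hc) hb)
  refine ⟨K, ⟨add_nonneg (by positivity) (𝓑.N_nonneg _ _), ?_,
    fun x y hx hy => hmul (by simp) (𝓑.N_nonneg _ _) (hC₀ x y hx hy),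
    fun x y hx hy => hmul (by simp) (𝓑.N_nonneg _ _) (hC₁ x y hx hy),
    fun x h hx hh => hmul (by simp) (𝓑.N_nonneg _ _) (hB₁ x h hx hh),
    fun x h hx hh => hmul (by simp) (𝓑.N_nonneg _ _) (hB₂ x h hx hh),
    fun k x y hk hx hy => ?_,
    fun x y hx hy => hmul (by simp) (𝓑.N_nonneg _ _) (hL x y hx hy),
    fun x hx => hmul (by simp) (𝓑.N_nonneg _ _) (hE x hx)⟩⟩
  · simp only [K]
    linarith [abs_nonneg C₀, abs_nonneg C₁, abs_nonneg B₁, abs_nonneg B₂, abs_nonneg D,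
      abs_nonneg L, abs_nonneg E]
  · rw [mul_assoc]
    exact hmul (by simp) (mul_nonneg (𝓑.N_nonneg _ _) (𝓑.N_nonneg _ _))
      ((hD k x y hk hx hy).trans_eq (mul_assoc _ _ _))

end AssumptionG

namespace CoefficientBounds

variable {𝓑 : BanachScale} {α σ γ T K CX : ℝ} {X : ℝ → ℝ} {G : 𝓑.E → 𝓑.E}
  {DG : 𝓑.E → 𝓑.E →ₗ[ℝ] 𝓑.E} {D2G : 𝓑.E → 𝓑.E →ₗ[ℝ] 𝓑.E →ₗ[ℝ] 𝓑.E}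
  {D3G : 𝓑.E → 𝓑.E →ₗ[ℝ] 𝓑.E →ₗ[ℝ] 𝓑.E →ₗ[ℝ] 𝓑.E} {y : ℝ → 𝓑.E} {s t : ℝ}

lemma N_DG_add_smul_sub_le (hG : AssumptionG 𝓑 α σ γ G DG D2G D3G)
    (hK : CoefficientBounds 𝓑 α σ γ G DG K) (hα : 0 ≤ α) (hσα : σ ≤ α) {a x R : 𝓑.E} (ξ : ℝ)
    (ha : 𝓑.Mem (γ - α) a) (hx : 𝓑.Mem (γ - α) x) (hR : 𝓑.Mem (γ - 2 * α) R) :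
    𝓑.N (γ - 2 * α - σ) (DG x (R + ξ • G a) - ξ • DG a (G a))
      ≤ K * 𝓑.N (γ - 2 * α) R + |ξ| * (K + K * K * K) * 𝓑.N (γ - α) (x - a) := by
  have h2α : 2 * α ∈ ({0, α, 2 * α} : Set ℝ) := by simp
  have hlow : ∀ z, 𝓑.Mem (γ - α) z → 𝓑.Mem (γ - 2 * α) z :=
    fun z hz => 𝓑.mem_mono (by linarith) z hz
  have hGmem : ∀ z, 𝓑.Mem (γ - α) z → 𝓑.Mem (γ - α - σ) (G z) :=
    hG.maps α (by simp)
  have hGlow : ∀ z, 𝓑.Mem (γ - α) z → 𝓑.Mem (γ - 2 * α) (G z) :=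
    fun z hz => 𝓑.mem_mono (by linarith) _ (hGmem z hz)
  have hDG : ∀ z h, 𝓑.Mem (γ - α) z → 𝓑.Mem (γ - 2 * α) h → 𝓑.Mem (γ - 2 * α - σ) (DG z h) :=
    fun z h hz hh => hG.DG_maps (2 * α) h2α z h (hlow z hz) hh
  have hsplit : DG x (R + ξ • G a) - ξ • DG a (G a)
      = DG x R + ξ • (DG x (G x) - DG a (G a)) + ξ • DG x (G a - G x) := by
    simp only [map_add, map_smul, map_sub, smul_sub]
    abel
  have hGdiff : 𝓑.N (γ - 2 * α) (G a - G x) ≤ K * (K * 𝓑.N (γ - α) (x - a)) := by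
    refine (hK.N_le_embed _ (mem_sub (hGmem a ha) (hGmem x hx))).trans ?_
    rw [𝓑.N_sub_comm (γ - α) x a]
    exact mul_le_mul_of_nonneg_left (hK.lipschitz_alpha x a hx ha) hK.nonneg
  have h₁ := hK.N_DG_le_two_alpha x R (hlow x hx) hR
  have h₂ := mul_le_mul_of_nonneg_left (hK.lipschitz_DGG a x ha hx) (abs_nonneg ξ)
  have h₃ := mul_le_mul_of_nonneg_left ((hK.N_DG_le_two_alpha x _ (hlow x hx)
    (mem_sub (hGlow a ha) (hGlow x hx))).trans (mul_le_mul_of_nonneg_left hGdiff hK.nonneg))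
    (abs_nonneg ξ)
  rw [hsplit]
  refine (𝓑.N_add _ _ _ (𝓑.mem_add _ _ _ (hDG x R hx hR) (𝓑.mem_smul _ _ _ (mem_sub
      (hDG x _ hx (hGlow x hx)) (hDG a _ ha (hGlow a ha)))))
      (𝓑.mem_smul _ _ _ (hDG x _ hx (mem_sub (hGlow a ha) (hGlow x hx))))).trans ?_
  refine (add_le_add_left (𝓑.N_add _ _ _ (hDG x R hx hR) (𝓑.mem_smul _ _ _ (mem_sub
      (hDG x _ hx (hGlow x hx)) (hDG a _ ha (hGlow a ha))))) _).trans ?_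
  rw [𝓑.N_smul, 𝓑.N_smul]
  linarith

lemma N_G_le (hG : AssumptionG 𝓑 α σ γ G DG D2G D3G) (hK : CoefficientBounds 𝓑 α σ γ G DG K)
    (hy : IsControlledPath 𝓑 α γ T X y (fun t => G (y t))) (ht₀ : 0 ≤ t) (htT : t ≤ T) :
    𝓑.N (γ - σ) (G (y t)) ≤ K * (1 + crpNorm 𝓑 α γ T X y (fun t => G (y t))) := by
  have hGmem : ∀ x, 𝓑.Mem γ x → 𝓑.Mem (γ - σ) (G x) := by simpa using hG.maps 0 (by simp)
  have hyt := hy.mem_y t ht₀ htT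
  have hlip := hK.lipschitz 0 (y t) (𝓑.mem_zero γ) hyt
  rw [sub_zero] at hlip
  have := mul_le_mul_of_nonneg_left (hy.N_le_crpNorm ht₀ htT) hK.nonneg
  linarith [N_le_N_add_N_sub (hGmem _ hyt) (hGmem _ (𝓑.mem_zero γ)), hK.N_G_zero_le]

lemma N_DGG_le (hK : CoefficientBounds 𝓑 α σ γ G DG K) (hα : 0 ≤ α)
    (hy : IsControlledPath 𝓑 α γ T X y (fun t => G (y t))) (ht₀ : 0 ≤ t)
    (htT : t ≤ T) :
    𝓑.N (γ - σ - α) (DG (y t) (G (y t))) ≤ K * crpNorm 𝓑 α γ T X y (fun t => G (y t)) := by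
  rw [show γ - σ - α = γ - α - σ by ring]
  exact (hK.N_DG_le_alpha _ _ (𝓑.mem_mono (by linarith) _ (hy.mem_y t ht₀ htT))
    (hy.mem_y' t ht₀ htT)).trans
    (mul_le_mul_of_nonneg_left (hy.N_deriv_le_crpNorm ht₀ htT) hK.nonneg)

lemma N_DGG_sub_le (hK : CoefficientBounds 𝓑 α σ γ G DG K) (hα : 0 ≤ α)
    (hX : ∀ s t, 0 ≤ s → s ≤ t → t ≤ T → |X t - X s| ≤ CX * (t - s) ^ α)
    (hy : IsControlledPath 𝓑 α γ T X y (fun t => G (y t))) (hs₀ : 0 ≤ s) (hst : s ≤ t)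
    (htT : t ≤ T) :
    𝓑.N (γ - σ - 2 * α) (DG (y t) (G (y t)) - DG (y s) (G (y s)))
      ≤ K * (1 + CX) * crpNorm 𝓑 α γ T X y (fun t => G (y t)) * (t - s) ^ α := by
  rw [show γ - σ - 2 * α = γ - 2 * α - σ by ring]
  have hmem : ∀ u, 0 ≤ u → u ≤ T → 𝓑.Mem (γ - α) (y u) :=
    fun u hu₀ huT => 𝓑.mem_mono (by linarith) _ (hy.mem_y u hu₀ huT)
  refine (hK.lipschitz_DGG _ _ (hmem s hs₀ (hst.trans htT)) (hmem t (hs₀.trans hst) htT)).trans ?_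
  have := mul_le_mul_of_nonneg_left (hy.N_sub_le_crpNorm hα hX hs₀ hst htT) hK.nonneg
  linarith

lemma N_remainder_le (hG : AssumptionG 𝓑 α σ γ G DG D2G D3G)
    (hK : CoefficientBounds 𝓑 α σ γ G DG K) (hα : 0 ≤ α)
    (hX : ∀ s t, 0 ≤ s → s ≤ t → t ≤ T → |X t - X s| ≤ CX * (t - s) ^ α)
    (hy : IsControlledPath 𝓑 α γ T X y (fun t => G (y t))) (hs₀ : 0 ≤ s) (hst : s ≤ t)
    (htT : t ≤ T) :
    𝓑.N (γ - σ - α)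
        (gubRemainder 𝓑 X (fun t => G (y t)) (fun t => DG (y t) (G (y t))) s t)
      ≤ K * (1 + 2 * CX) * crpNorm 𝓑 α γ T X y (fun t => G (y t)) * (t - s) ^ α := by
  have hsT := hst.trans htT
  have ht₀ := hs₀.trans hst
  have hmem : ∀ u, 0 ≤ u → u ≤ T → 𝓑.Mem (γ - α) (y u) :=
    fun u hu₀ huT => 𝓑.mem_mono (by linarith) _ (hy.mem_y u hu₀ huT)
  have hDGG := hK.N_DGG_le hα hy hs₀ hsT
  rw [show γ - σ - α = γ - α - σ by ring] at hDGG ⊢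
  have hGmem := hG.maps α (by simp)
  refine (N_sub_le (mem_sub (hGmem _ (hmem t ht₀ htT)) (hGmem _ (hmem s hs₀ hsT)))
    (𝓑.mem_smul _ _ _ (hG.DG_maps α (by simp) _ _ (hmem s hs₀ hsT) (hy.mem_y' s hs₀ hsT)))).trans ?_
  rw [𝓑.N_smul]
  have h₁ := mul_le_mul_of_nonneg_left (hy.N_sub_le_crpNorm hα hX hs₀ hst htT) hK.nonneg
  have h₂ := mul_le_mul (hX s t hs₀ hst htT) hDGG (𝓑.N_nonneg _ _)
    ((abs_nonneg _).trans (hX s t hs₀ hst htT))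
  linarith [hK.lipschitz_alpha _ _ (hmem s hs₀ hsT) (hmem t ht₀ htT)]

lemma N_DG_segment_sub_le (hG : AssumptionG 𝓑 α σ γ G DG D2G D3G)
    (hK : CoefficientBounds 𝓑 α σ γ G DG K) (hα : 0 ≤ α) (hσα : σ ≤ α)
    (hX : ∀ s t, 0 ≤ s → s ≤ t → t ≤ T → |X t - X s| ≤ CX * (t - s) ^ α)
    (hy : IsControlledPath 𝓑 α γ T X y (fun t => G (y t))) (hs₀ : 0 ≤ s) (hst : s ≤ t)
    (htT : t ≤ T) {r : ℝ} (hr : r ∈ Icc (0:ℝ) 1) :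
    𝓑.N (γ - 2 * α - σ)
        (DG (y s + r • (y t - y s)) (y t - y s) - (X t - X s) • DG (y s) (G (y s)))
      ≤ (K + CX * (1 + CX) * (K + K * K * K)) * crpNorm 𝓑 α γ T X y (fun t => G (y t))
        * (t - s) ^ (2 * α) := by
  have hsT := hst.trans htT
  have hys := hy.mem_y s hs₀ hsT
  have hyt := hy.mem_y t (hs₀.trans hst) htT
  have hmid : ∀ z, 𝓑.Mem γ z → 𝓑.Mem (γ - α) z := fun z hz => 𝓑.mem_mono (by linarith) z hz
  have hRmem : 𝓑.Mem (γ - 2 * α) (gubRemainder 𝓑 X y (fun t => G (y t)) s t) :=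
    𝓑.mem_mono (by linarith) _ (mem_sub (mem_sub (hmid _ hyt) (hmid _ hys))
      (𝓑.mem_smul _ _ _ (hy.mem_y' s hs₀ hsT)))
  have hinc : 𝓑.N (γ - α) (y s + r • (y t - y s) - y s)
      ≤ (1 + CX) * crpNorm 𝓑 α γ T X y (fun t => G (y t)) * (t - s) ^ α := by
    rw [add_sub_cancel_left, 𝓑.N_smul, abs_of_nonneg hr.1]
    exact (mul_le_of_le_one_left (𝓑.N_nonneg _ _) hr.2).trans
      (hy.N_sub_le_crpNorm hα hX hs₀ hst htT)
  have hTaylor := hK.N_DG_add_smul_sub_le hG hα hσα (X t - X s) (hmid _ hys)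
    (hmid _ (𝓑.mem_add _ _ _ hys (𝓑.mem_smul _ r _ (mem_sub hyt hys)))) hRmem
  rw [show gubRemainder 𝓑 X y (fun t => G (y t)) s t + (X t - X s) • G (y s) = y t - y s by
    simp [gubRemainder]] at hTaylor
  refine hTaylor.trans ?_
  have hR := mul_le_mul_of_nonneg_left (hy.N_remainder_le_crpNorm_two hs₀ hst htT) hK.nonneg
  have hξ := mul_le_mul (hX s t hs₀ hst htT) hinc (𝓑.N_nonneg _ _)
    ((abs_nonneg _).trans (hX s t hs₀ hst htT))
  have hK₀ := hK.nonneg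
  have := mul_le_mul_of_nonneg_right hξ (by positivity : 0 ≤ K + K * K * K)
  rw [two_mul, Real.rpow_add_of_nonneg (sub_nonneg.2 hst) hα hα] at hR ⊢
  linarith

lemma N_remainder_le_two (hG : AssumptionG 𝓑 α σ γ G DG D2G D3G)
    (hK : CoefficientBounds 𝓑 α σ γ G DG K) (hα : 0 ≤ α) (hσα : σ ≤ α)
    (hX : ∀ s t, 0 ≤ s → s ≤ t → t ≤ T → |X t - X s| ≤ CX * (t - s) ^ α)
    (hy : IsControlledPath 𝓑 α γ T X y (fun t => G (y t))) (hs₀ : 0 ≤ s) (hst : s ≤ t)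
    (htT : t ≤ T) :
    𝓑.N (γ - σ - 2 * α)
        (gubRemainder 𝓑 X (fun t => G (y t)) (fun t => DG (y t) (G (y t))) s t)
      ≤ (K + CX * (1 + CX) * (K + K * K * K)) * crpNorm 𝓑 α γ T X y (fun t => G (y t))
        * (t - s) ^ (2 * α) := by
  have hsT := hst.trans htT
  have h2α : 2 * α ∈ ({0, α, 2 * α} : Set ℝ) := by simp
  have hlow : ∀ z, 𝓑.Mem γ z → 𝓑.Mem (γ - 2 * α) z := fun z hz => 𝓑.mem_mono (by linarith) z hz
  have hys := hy.mem_y s hs₀ hsT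
  have hδy := hlow _ (mem_sub (hy.mem_y t (hs₀.trans hst) htT) hys)
  have hseg : ∀ r ∈ Icc (0:ℝ) 1, 𝓑.Mem (γ - 2 * α) (y s + r • (y t - y s)) :=
    fun r _ => 𝓑.mem_add _ _ _ (hlow _ hys) (𝓑.mem_smul _ _ _ hδy)
  have key := N_sub_sub_le_of_hasFDerivAtLevels hδy
    (𝓑.mem_smul _ (X t - X s) _ (hG.DG_maps (2 * α) h2α _ _ (hlow _ hys)
      (𝓑.mem_mono (by linarith) _ (hy.mem_y' s hs₀ hsT))))
    (fun r hr => hG.maps (2 * α) h2α _ (hseg r hr))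
    (fun r hr => hG.DG_maps (2 * α) h2α _ _ (hseg r hr) hδy)
    (fun r hr => hG.DG_isDeriv (2 * α) h2α _ (hseg r hr))
    (fun r hr => hK.N_DG_segment_sub_le hG hα hσα hX hy hs₀ hst htT hr)
  rw [add_sub_cancel] at key
  rwa [show γ - σ - 2 * α = γ - 2 * α - σ by ring]

lemma levelContinuousOn_G (hK : CoefficientBounds 𝓑 α σ γ G DG K)
    (hy : IsControlledPath 𝓑 α γ T X y (fun t => G (y t))) :
    𝓑.LevelContinuousOn (γ - σ) T (fun t => G (y t)) :=
  LevelContinuousOn.of_N_sub_le hy.cont_y fun t ht₀ htT =>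
    ⟨K, fun s hs₀ hsT => hK.lipschitz _ _ (hy.mem_y t ht₀ htT) (hy.mem_y s hs₀ hsT)⟩

lemma levelContinuousOn_DGG (hG : AssumptionG 𝓑 α σ γ G DG D2G D3G)
    (hK : CoefficientBounds 𝓑 α σ γ G DG K) (hα : 0 ≤ α) (hσα : σ ≤ α)
    (hy : IsControlledPath 𝓑 α γ T X y (fun t => G (y t))) :
    𝓑.LevelContinuousOn (γ - σ - α) T (fun t => DG (y t) (G (y t))) := by
  obtain ⟨c₁, hc₁pos, hc₁⟩ := 𝓑.embed_bound (show γ - α ≤ γ - σ by linarith)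
  obtain ⟨c₂, -, hc₂⟩ := 𝓑.embed_bound (show γ - α ≤ γ by linarith)
  have hGmem : ∀ x, 𝓑.Mem γ x → 𝓑.Mem (γ - σ) (G x) := by simpa using hG.maps 0 (by simp)
  have hmid : ∀ z, 𝓑.Mem γ z → 𝓑.Mem (γ - α) z := fun z hz => 𝓑.mem_mono (by linarith) z hz
  rw [show γ - σ - α = γ - α - σ by ring]
  refine LevelContinuousOn.of_N_sub_le hy.cont_y fun t ht₀ htT =>
    ⟨K * (c₁ * K) + K * 𝓑.N (γ - α) (G (y t)) * c₂, fun s hs₀ hsT => ?_⟩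
  have hys := hy.mem_y s hs₀ hsT
  have hyt := hy.mem_y t ht₀ htT
  have hGd : 𝓑.Mem (γ - σ) (G (y s) - G (y t)) := mem_sub (hGmem _ hys) (hGmem _ hyt)
  have hsplit : DG (y s) (G (y s)) - DG (y t) (G (y t))
      = DG (y s) (G (y s) - G (y t)) + (DG (y s) (G (y t)) - DG (y t) (G (y t))) := by
    rw [map_sub]
    abel
  have hDG := hG.DG_maps α (by simp)
  rw [hsplit]
  refine (𝓑.N_add _ _ _ (hDG _ _ (hmid _ hys) (𝓑.mem_mono (by linarith) _ hGd))
    (mem_sub (hDG _ _ (hmid _ hys) (hy.mem_y' t ht₀ htT))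
      (hDG _ _ (hmid _ hyt) (hy.mem_y' t ht₀ htT)))).trans ?_
  have h₁ := (hK.N_DG_le_alpha _ _ (hmid _ hys) (𝓑.mem_mono (by linarith) _ hGd)).trans
    (mul_le_mul_of_nonneg_left ((hc₁ _ hGd).trans (mul_le_mul_of_nonneg_left
      (hK.lipschitz _ _ hyt hys) hc₁pos.le)) hK.nonneg)
  have h₂ := (hK.lipschitz_DG _ _ _ (hy.mem_y' t ht₀ htT) (hmid _ hyt) (hmid _ hys)).trans
    (mul_le_mul_of_nonneg_left (hc₂ _ (mem_sub hys hyt))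
      (mul_nonneg hK.nonneg (𝓑.N_nonneg _ _)))
  linarith

lemma isControlledPath (hG : AssumptionG 𝓑 α σ γ G DG D2G D3G)
    (hK : CoefficientBounds 𝓑 α σ γ G DG K) (hα : 0 ≤ α) (hσα : σ ≤ α)
    (hX : ∀ s t, 0 ≤ s → s ≤ t → t ≤ T → |X t - X s| ≤ CX * (t - s) ^ α)
    (hy : IsControlledPath 𝓑 α γ T X y (fun t => G (y t))) :
    IsControlledPath 𝓑 α (γ - σ) T X (fun t => G (y t)) (fun t => DG (y t) (G (y t))) := by
  have hGmem : ∀ x, 𝓑.Mem γ x → 𝓑.Mem (γ - σ) (G x) := by simpa using hG.maps 0 (by simp)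
  refine ⟨fun t ht₀ htT => hGmem _ (hy.mem_y t ht₀ htT), fun t ht₀ htT => ?_,
    hK.levelContinuousOn_G hy, hK.levelContinuousOn_DGG hG hα hσα hy,
    ⟨_, fun s t hs₀ hst htT => hK.N_DGG_sub_le hα hX hy hs₀ hst htT⟩,
    ⟨_, fun s t hs₀ hst htT => hK.N_remainder_le hG hα hX hy hs₀ hst htT⟩,
    ⟨_, fun s t hs₀ hst htT => hK.N_remainder_le_two hG hα hσα hX hy hs₀ hst htT⟩⟩
  rw [show γ - σ - α = γ - α - σ by ring]
  exact hG.DG_maps α (by simp) _ _ (𝓑.mem_mono (by linarith) _ (hy.mem_y t ht₀ htT))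
    (hy.mem_y' t ht₀ htT)

lemma crpNorm_le (hG : AssumptionG 𝓑 α σ γ G DG D2G D3G)
    (hK : CoefficientBounds 𝓑 α σ γ G DG K) (hα : 0 ≤ α) (hσα : σ ≤ α) (hCX : 0 ≤ CX)
    (hX : ∀ s t, 0 ≤ s → s ≤ t → t ≤ T → |X t - X s| ≤ CX * (t - s) ^ α)
    (hy : IsControlledPath 𝓑 α γ T X y (fun t => G (y t))) :
    crpNorm 𝓑 α (γ - σ) T X (fun t => G (y t)) (fun t => DG (y t) (G (y t)))
      ≤ (2 * K + K * (1 + CX) + K * (1 + 2 * CX) + (K + CX * (1 + CX) * (K + K * K * K)))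
        * (1 + crpNorm 𝓑 α γ T X y (fun t => G (y t))) := by
  have hN : 0 ≤ crpNorm 𝓑 α γ T X y (fun t => G (y t)) := crpNorm_nonneg
  have hK₀ := hK.nonneg
  refine (crpNorm_le_of_bounds (by positivity) (by positivity) (by positivity) (by positivity)
    (by positivity) (fun t ht₀ htT => hK.N_G_le hG hy ht₀ htT)
    (fun t ht₀ htT => hK.N_DGG_le hα hy ht₀ htT)
    (fun s t hs₀ hst htT => hK.N_DGG_sub_le hα hX hy hs₀ hst htT)
    (fun s t hs₀ hst htT => hK.N_remainder_le hG hα hX hy hs₀ hst htT)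
    (fun s t hs₀ hst htT => hK.N_remainder_le_two hG hα hσα hX hy hs₀ hst htT)).trans ?_
  have hc : 0 ≤ K * (1 + CX) + K * (1 + 2 * CX) + (K + CX * (1 + CX) * (K + K * K * K)) := by
    positivity
  nlinarith

end CoefficientBounds

lemma RoughPath.exists_nonneg_holderX {α T : ℝ} (RP : RoughPath α T) :
    ∃ C ≥ (0:ℝ), ∀ s t : ℝ, 0 ≤ s → s ≤ t → t ≤ T → |RP.X t - RP.X s| ≤ C * (t - s) ^ α := by
  obtain ⟨C, hC⟩ := RP.holderX
  exact ⟨max C 0, le_max_right _ _, fun s t hs₀ hst htT => (hC s t hs₀ hst htT).trans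
    (mul_le_mul_of_nonneg_right (le_max_left _ _) (Real.rpow_nonneg (sub_nonneg.2 hst) _))⟩

theorem statement12_general (α T γ σ : ℝ) (hα : 1/3 < α)
    (hσα : σ < α)
    (𝓑 : BanachScale) (RP : RoughPath α T)
    (G : 𝓑.E → 𝓑.E) (DG : 𝓑.E → 𝓑.E →ₗ[ℝ] 𝓑.E)
    (D2G : 𝓑.E → 𝓑.E →ₗ[ℝ] 𝓑.E →ₗ[ℝ] 𝓑.E)
    (D3G : 𝓑.E → 𝓑.E →ₗ[ℝ] 𝓑.E →ₗ[ℝ] 𝓑.E →ₗ[ℝ] 𝓑.E)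
    (hG : AssumptionG 𝓑 α σ γ G DG D2G D3G) :
    ∃ C > (0:ℝ), ∀ y : ℝ → 𝓑.E,
      IsControlledPath 𝓑 α γ T RP.X y (fun t => G (y t)) →
      IsControlledPath 𝓑 α (γ - σ) T RP.X (fun t => G (y t))
        (fun t => DG (y t) (G (y t))) ∧
      crpNorm 𝓑 α (γ - σ) T RP.X (fun t => G (y t)) (fun t => DG (y t) (G (y t)))
        ≤ C * (1 + crpNorm 𝓑 α γ T RP.X y (fun t => G (y t))) := by
  have hα₀ : 0 ≤ α := by linarith
  obtain ⟨K, hK⟩ := hG.exists_coefficientBounds hα₀ hσα.le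
  obtain ⟨CX, hCX, hX⟩ := RP.exists_nonneg_holderX
  have hK₀ := hK.nonneg
  refine ⟨2 * K + K * (1 + CX) + K * (1 + 2 * CX) + (K + CX * (1 + CX) * (K + K * K * K)) + 1,
    by positivity, fun y hy => ⟨hK.isControlledPath hG hα₀ hσα.le hX hy,
      (hK.crpNorm_le hG hα₀ hσα.le hCX hX hy).trans ?_⟩⟩
  have hN : 0 ≤ crpNorm 𝓑 α γ T RP.X y (fun t => G (y t)) := crpNorm_nonneg
  nlinarith

/-- Let `G` satisfy assumption (G) and let `(y, G(y)) ∈ D^{2α}_{X,γ}` be a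
controlled rough path whose Gubinelli derivative is `G(y)`.  Then
`(G(y), DG(y)G(y)) ∈ D^{2α}_{X,γ-σ}` and
`‖G(y), DG(y)G(y)‖_{X,2α,γ-σ} ≲ 1 + ‖y, G(y)‖_{X,2α,γ}`, the bound being linear (not
quadratic) in `‖y, G(y)‖_{X,2α,γ}`. -/
theorem statement12 (α T γ σ : ℝ) (hα : 1/3 < α) (hα' : α < 1/2) (hT : 0 < T)
    (hσ : 0 ≤ σ) (hσα : σ < α)
    (𝓑 : BanachScale) (RP : RoughPath α T)
    (G : 𝓑.E → 𝓑.E) (DG : 𝓑.E → 𝓑.E →ₗ[ℝ] 𝓑.E)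
    (D2G : 𝓑.E → 𝓑.E →ₗ[ℝ] 𝓑.E →ₗ[ℝ] 𝓑.E)
    (D3G : 𝓑.E → 𝓑.E →ₗ[ℝ] 𝓑.E →ₗ[ℝ] 𝓑.E →ₗ[ℝ] 𝓑.E)
    (hG : AssumptionG 𝓑 α σ γ G DG D2G D3G) :
    ∃ C > (0:ℝ), ∀ y : ℝ → 𝓑.E,
      IsControlledPath 𝓑 α γ T RP.X y (fun t => G (y t)) →
      IsControlledPath 𝓑 α (γ - σ) T RP.X (fun t => G (y t))
        (fun t => DG (y t) (G (y t))) ∧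
      crpNorm 𝓑 α (γ - σ) T RP.X (fun t => G (y t)) (fun t => DG (y t) (G (y t)))
        ≤ C * (1 + crpNorm 𝓑 α γ T RP.X y (fun t => G (y t))) :=
  statement12_general α T γ σ hα hσα 𝓑 RP G DG D2G D3G hG
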